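/- arXiv:2408.15131 — 2 statements merged into one kernel-verified Lean document; each statement's English description precedes it below -/
import Mathlib

section
/- For every integer d ≥ 2 and all reals γ > 0 and α > 0: lim_{κ→0⁺} ∫₀^∞ exp( −γ κ^{−d/2} G(√κ · u^{1/α}) ) du = ∫₀^∞ exp( −γ (κ_d/2) u^{d/α} ) du. -/
open MeasureTheory Real Filter

/-- `ω_k`, the surface area of the (k−1)-dimensional Euclidean unit sphere. -/
noncomputable def omegaS (k : ℕ) : ℝ := 2 * Real.pi ^ ((k : ℝ) / 2) / Real.Gamma ((k : ℝ) / 2)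

/-- `κ_k`, the volume of the k-dimensional Euclidean unit ball. -/
noncomputable def kappaV (k : ℕ) : ℝ := omegaS k / k

/-- `G(u) := κ_{d−1} ∫₀^u (2 e^{−t} (cosh u − cosh t))^{(d−1)/2} dt`. -/
noncomputable def Gfun (d : ℕ) (u : ℝ) : ℝ :=
  kappaV (d - 1) *
    ∫ t in (0:ℝ)..u, (2 * Real.exp (-t) * (Real.cosh u - Real.cosh t)) ^ (((d : ℝ) - 1) / 2)

/-!
For `0 ≤ t ≤ r` one has `(r² - t²)/2 ≤ cosh r - cosh t ≤ cosh r · (r² - t²)/2`, so the integrand of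
`G(r)` lies between `(e^{-r} (r² - t²))^{(d-1)/2}` and `(cosh r · (r² - t²))^{(d-1)/2}`. As
`∫₀^r (r² - t²)^{(d-1)/2} dt = r^d ∫₀¹ (1 - s²)^{(d-1)/2} ds` and, by slicing the unit ball,
`κ_{d-1} ∫₀¹ (1 - s²)^{(d-1)/2} ds = κ_d / 2`, this gives `G(r) ~ κ_d r^d / 2` as `r → 0⁺`; with
`r = √κ u^{1/α}` this is the pointwise limit of the integrands. The same bounds give
`G(r) ≥ c · min (r^d, r^{d-1})`, so for `κ ≤ 1` the integrands are dominated by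
`exp(-c' u^{d/α}) + exp(-c' u^{(d-1)/α})` and dominated convergence applies.
-/

open Set Topology

lemma sq_sub_sq_nonneg {t r : ℝ} (ht : 0 ≤ t) (htr : t ≤ r) : 0 ≤ r ^ 2 - t ^ 2 :=
  sub_nonneg.2 (pow_le_pow_left₀ ht htr 2)

lemma sinh_le_mul_cosh {x : ℝ} (hx : 0 ≤ x) : sinh x ≤ x * cosh x := by
  have hmono : MonotoneOn (fun y : ℝ => y * cosh y - sinh y) (Ici 0) := by
    have hderiv (y : ℝ) : HasDerivAt (fun y : ℝ => y * cosh y - sinh y) (y * sinh y) y := by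
      refine (((hasDerivAt_id' y).mul (hasDerivAt_cosh y)).sub (hasDerivAt_sinh y)).congr_deriv ?_
      ring
    refine monotoneOn_of_deriv_nonneg (convex_Ici 0) (by fun_prop)
      (fun y _ => (hderiv y).differentiableAt.differentiableWithinAt) fun y hy => ?_
    rw [interior_Ici] at hy
    rw [(hderiv y).deriv]
    exact mul_nonneg hy.le (sinh_nonneg_iff.2 hy.le)
  simpa using hmono self_mem_Ici (mem_Ici.2 hx) hx

lemma cosh_sub_cosh (v t : ℝ) :
    cosh v - cosh t = 2 * sinh ((v + t) / 2) * sinh ((v - t) / 2) := by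
  have hv : cosh v = cosh ((v + t) / 2 + (v - t) / 2) := by ring_nf
  have ht : cosh t = cosh ((v + t) / 2 - (v - t) / 2) := by ring_nf
  rw [hv, ht, cosh_add, cosh_sub]
  ring

lemma sq_sub_sq_div_two_le_cosh_sub_cosh {t v : ℝ} (ht : 0 ≤ t) (htv : t ≤ v) :
    (v ^ 2 - t ^ 2) / 2 ≤ cosh v - cosh t := by
  have ha : 0 ≤ (v + t) / 2 := by linarith
  have hb : 0 ≤ (v - t) / 2 := by linarith
  rw [cosh_sub_cosh]
  nlinarith [self_le_sinh_iff.2 ha, self_le_sinh_iff.2 hb]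

lemma cosh_sub_cosh_le_sq_sub_sq_div_two_mul_cosh {t v : ℝ} (ht : 0 ≤ t) (htv : t ≤ v) :
    cosh v - cosh t ≤ (v ^ 2 - t ^ 2) / 2 * cosh v := by
  set a := (v + t) / 2
  set b := (v - t) / 2
  have ha : 0 ≤ a := by simp only [a]; linarith
  have hb : 0 ≤ b := by simp only [b]; linarith
  have hcosh : cosh a * cosh b ≤ cosh v := by
    rw [show v = a + b by ring, cosh_add]
    nlinarith [sinh_nonneg_iff.2 ha, sinh_nonneg_iff.2 hb]
  calc cosh v - cosh t = 2 * sinh a * sinh b := cosh_sub_cosh v t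
    _ ≤ 2 * (a * cosh a) * (b * cosh b) := by
      gcongr
      · exact sinh_le_mul_cosh ha
      · exact sinh_le_mul_cosh hb
    _ = (v ^ 2 - t ^ 2) / 2 * (cosh a * cosh b) := by ring
    _ ≤ (v ^ 2 - t ^ 2) / 2 * cosh v := by
      have := sq_sub_sq_nonneg ht htv
      gcongr

lemma exp_neg_mul_sq_sub_sq_le {t r : ℝ} (ht : 0 ≤ t) (htr : t ≤ r) :
    exp (-t) * (r ^ 2 - t ^ 2) ≤ 2 * exp (-t) * (cosh r - cosh t) := by
  nlinarith [sq_sub_sq_div_two_le_cosh_sub_cosh ht htr, exp_pos (-t)]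

lemma two_mul_exp_neg_mul_cosh_sub_cosh_le {t r : ℝ} (ht : 0 ≤ t) (htr : t ≤ r) :
    2 * exp (-t) * (cosh r - cosh t) ≤ cosh r * (r ^ 2 - t ^ 2) := by
  have hexp : exp (-t) ≤ 1 := exp_le_one_iff.2 (by linarith)
  have hcosh : 0 ≤ cosh r - cosh t :=
    sub_nonneg.2 (cosh_strictMonoOn.monotoneOn ht (ht.trans htr) htr)
  nlinarith [cosh_sub_cosh_le_sq_sub_sq_div_two_mul_cosh ht htr, exp_pos (-t)]

lemma integral_cos_pow_eq_Gamma (n : ℕ) :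
    ∫ x in (0:ℝ)..π / 2, cos x ^ n = √π * Gamma ((n + 1) / 2) / (2 * Gamma (n / 2 + 1)) := by
  induction n using Nat.twoStepInduction with
  | zero => norm_num [Gamma_one_half_eq, mul_self_sqrt pi_pos.le]
  | one =>
    have h : Gamma (3 / 2) = 1 / 2 * Gamma (1 / 2) := by
      rw [show (3:ℝ) / 2 = 1 / 2 + 1 by norm_num, Gamma_add_one (by norm_num)]
    norm_num [integral_cos, h, Gamma_one_half_eq]
    field_simp
  | more n ih _ =>
    have hG₁ : Gamma ((n + 2 + 1) / 2) = (n + 1) / 2 * Gamma ((n + 1) / 2) := by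
      rw [show ((n:ℝ) + 2 + 1) / 2 = (n + 1) / 2 + 1 by ring, Gamma_add_one (by positivity)]
    have hG₂ : Gamma ((n + 2) / 2 + 1) = (n / 2 + 1) * Gamma (n / 2 + 1) := by
      rw [show ((n:ℝ) + 2) / 2 + 1 = n / 2 + 1 + 1 by ring, Gamma_add_one (by positivity)]
    have : Gamma (n / 2 + 1) ≠ 0 := (Gamma_pos_of_pos (by positivity)).ne'
    rw [integral_cos_pow, cos_pi_div_two, sin_zero, zero_pow n.succ_ne_zero, ih]
    push_cast
    rw [hG₁, hG₂]
    field_simp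
    ring

noncomputable def ballSliceIntegral (n : ℝ) : ℝ := ∫ s in (0:ℝ)..1, (1 - s ^ 2) ^ ((n - 1) / 2)

lemma ballSliceIntegral_pos {n : ℝ} (hn : 1 ≤ n) : 0 < ballSliceIntegral n := by
  refine intervalIntegral.intervalIntegral_pos_of_pos_on ?_ (fun s hs => ?_) zero_lt_one
  · exact (Continuous.rpow_const (by fun_prop) fun _ => Or.inr (by linarith)).intervalIntegrable _ _
  · exact rpow_pos_of_pos (by nlinarith [hs.1, hs.2]) _

lemma sq_rpow_div_two {x : ℝ} (hx : 0 ≤ x) (r : ℝ) : (x ^ 2) ^ (r / 2) = x ^ r := by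
  rw [rpow_div_two_eq_sqrt r (sq_nonneg x), sqrt_sq hx]

lemma ballSliceIntegral_natCast_eq_integral_cos_pow {n : ℕ} (hn : 1 ≤ n) :
    ballSliceIntegral n = ∫ x in (0:ℝ)..π / 2, cos x ^ n := by
  have hcont : Continuous fun s : ℝ => (1 - s ^ 2) ^ (((n:ℝ) - 1) / 2) :=
    (continuous_rpow_const (by rw [← Nat.cast_pred hn]; positivity)).comp (by fun_prop)
  have hsubst := intervalIntegral.integral_deriv_smul_comp (a := 0) (b := π / 2)
    (fun x _ => hasDerivAt_sin x) continuous_cos.continuousOn hcont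
  rw [sin_zero, sin_pi_div_two] at hsubst
  rw [ballSliceIntegral, ← hsubst]
  refine intervalIntegral.integral_congr fun x hx => ?_
  rw [uIcc_of_le (by positivity)] at hx
  have hcos : 0 ≤ cos x := cos_nonneg_of_mem_Icc ⟨by linarith [hx.1, pi_pos], hx.2⟩
  simp only [Function.comp_apply, smul_eq_mul]
  rw [← cos_sq', sq_rpow_div_two hcos, ← Nat.cast_pred hn, rpow_natCast, ← pow_succ',
    Nat.sub_add_cancel hn]

lemma kappaV_eq {k : ℕ} (hk : k ≠ 0) : kappaV k = π ^ ((k:ℝ) / 2) / Gamma (k / 2 + 1) := by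
  have : Gamma ((k:ℝ) / 2) ≠ 0 := (Gamma_pos_of_pos (by positivity)).ne'
  rw [kappaV, omegaS, Gamma_add_one (by positivity)]
  field_simp

lemma kappaV_pos {k : ℕ} (hk : k ≠ 0) : 0 < kappaV k := by
  rw [kappaV_eq hk]
  exact div_pos (rpow_pos_of_pos pi_pos _) (Gamma_pos_of_pos (by positivity))

lemma kappaV_pred_mul_ballSliceIntegral {d : ℕ} (hd : 2 ≤ d) :
    kappaV (d - 1) * ballSliceIntegral d = kappaV d / 2 := by
  have hpi : π ^ (((d:ℝ) - 1) / 2) * √π = π ^ ((d:ℝ) / 2) := by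
    rw [sqrt_eq_rpow, ← rpow_add pi_pos]
    ring_nf
  rw [ballSliceIntegral_natCast_eq_integral_cos_pow (by omega), integral_cos_pow_eq_Gamma,
    kappaV_eq (by omega), kappaV_eq (by omega), Nat.cast_pred (by omega),
    show ((d:ℝ) - 1) / 2 + 1 = (d + 1) / 2 by ring]
  have : Gamma (((d:ℝ) + 1) / 2) ≠ 0 := (Gamma_pos_of_pos (by positivity)).ne'
  rw [← hpi]
  field_simp

lemma intervalIntegral_rpow_mono {f g : ℝ → ℝ} {a b q : ℝ} (hab : a ≤ b) (hq : 0 ≤ q)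
    (hf : Continuous f) (hg : Continuous g) (hfg : ∀ t ∈ Icc a b, 0 ≤ f t ∧ f t ≤ g t) :
    ∫ t in a..b, f t ^ q ≤ ∫ t in a..b, g t ^ q :=
  intervalIntegral.integral_mono_on hab ((hf.rpow_const fun _ => Or.inr hq).intervalIntegrable _ _)
    ((hg.rpow_const fun _ => Or.inr hq).intervalIntegrable _ _)
    fun t ht => rpow_le_rpow (hfg t ht).1 (hfg t ht).2 hq

lemma intervalIntegral_const_mul_rpow {f : ℝ → ℝ} {a b c q : ℝ} (hab : a ≤ b) (hc : 0 ≤ c)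
    (hf : ∀ t ∈ Icc a b, 0 ≤ f t) :
    ∫ t in a..b, (c * f t) ^ q = c ^ q * ∫ t in a..b, f t ^ q := by
  rw [← intervalIntegral.integral_const_mul]
  refine intervalIntegral.integral_congr fun t ht => ?_
  rw [uIcc_of_le hab] at ht
  exact mul_rpow hc (hf t ht)

section coshIntegral

variable {n r : ℝ}

noncomputable def coshIntegral (n r : ℝ) : ℝ :=
  ∫ t in (0:ℝ)..r, (2 * exp (-t) * (cosh r - cosh t)) ^ ((n - 1) / 2)

lemma Gfun_eq_mul_coshIntegral (d : ℕ) (u : ℝ) : Gfun d u = kappaV (d - 1) * coshIntegral d u :=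
  rfl

lemma continuous_coshIntegral (hn : 1 ≤ n) : Continuous (coshIntegral n) := by
  have hq : 0 ≤ (n - 1) / 2 := by linarith
  refine intervalIntegral.continuous_parametric_intervalIntegral_of_continuous
    (f := fun r t => (2 * exp (-t) * (cosh r - cosh t)) ^ ((n - 1) / 2)) ?_ continuous_id
  exact Continuous.rpow_const (by fun_prop) fun _ => Or.inr hq

lemma integral_sq_sub_sq_rpow (n : ℝ) (hr : 0 < r) :
    ∫ t in (0:ℝ)..r, (r ^ 2 - t ^ 2) ^ ((n - 1) / 2) = r ^ n * ballSliceIntegral n := by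
  have hscale := intervalIntegral.integral_comp_mul_left
    (fun t => (r ^ 2 - t ^ 2) ^ ((n - 1) / 2)) (a := 0) (b := 1) hr.ne'
  rw [mul_zero, mul_one, smul_eq_mul] at hscale
  have hsq : ∫ s in (0:ℝ)..1, (r ^ 2 - (r * s) ^ 2) ^ ((n - 1) / 2)
      = r ^ (n - 1) * ballSliceIntegral n := by
    simp_rw [mul_pow, ← mul_one_sub]
    rw [intervalIntegral_const_mul_rpow zero_le_one (sq_nonneg r)
      fun s hs => by nlinarith [hs.1, hs.2], sq_rpow_div_two hr.le, ballSliceIntegral]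
  rw [hsq, eq_inv_mul_iff_mul_eq₀ hr.ne'] at hscale
  rw [← hscale, rpow_sub_one hr.ne']
  field_simp

lemma coshIntegral_le (hn : 1 ≤ n) (hr : 0 < r) :
    coshIntegral n r ≤ cosh r ^ ((n - 1) / 2) * (r ^ n * ballSliceIntegral n) := by
  rw [← integral_sq_sub_sq_rpow n hr, ← intervalIntegral_const_mul_rpow hr.le (cosh_pos r).le
    fun t ht => sq_sub_sq_nonneg ht.1 ht.2]
  refine intervalIntegral_rpow_mono hr.le (by linarith) (by fun_prop) (by fun_prop) fun t ht => ?_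
  have := sq_sub_sq_nonneg ht.1 ht.2
  exact ⟨(exp_neg_mul_sq_sub_sq_le ht.1 ht.2).trans' (by positivity),
    two_mul_exp_neg_mul_cosh_sub_cosh_le ht.1 ht.2⟩

lemma exp_neg_rpow_mul_le_coshIntegral (hn : 1 ≤ n) (hr : 0 < r) :
    exp (-r) ^ ((n - 1) / 2) * (r ^ n * ballSliceIntegral n) ≤ coshIntegral n r := by
  rw [← integral_sq_sub_sq_rpow n hr, ← intervalIntegral_const_mul_rpow hr.le (exp_pos _).le
    fun t ht => sq_sub_sq_nonneg ht.1 ht.2]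
  refine intervalIntegral_rpow_mono hr.le (by linarith) (by fun_prop) (by fun_prop) fun t ht => ?_
  have hsq := sq_sub_sq_nonneg ht.1 ht.2
  refine ⟨by positivity, le_trans ?_ (exp_neg_mul_sq_sub_sq_le ht.1 ht.2)⟩
  exact mul_le_mul_of_nonneg_right (exp_le_exp.2 (by linarith [ht.2])) hsq

lemma exp_neg_one_rpow_mul_le_coshIntegral (hn : 1 ≤ n) (hr : 1 ≤ r) :
    exp (-1) ^ ((n - 1) / 2) * (r ^ (n - 1) * ballSliceIntegral n) ≤ coshIntegral n r := by
  have hq : 0 ≤ (n - 1) / 2 := by linarith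
  have hkernel : ∀ t ∈ Icc 0 r, 0 ≤ 2 * exp (-t) * (cosh r - cosh t) := fun t ht =>
    (mul_nonneg (exp_pos _).le (sq_sub_sq_nonneg ht.1 ht.2)).trans
      (exp_neg_mul_sq_sub_sq_le ht.1 ht.2)
  calc exp (-1) ^ ((n - 1) / 2) * (r ^ (n - 1) * ballSliceIntegral n)
      = ∫ t in (0:ℝ)..1, (exp (-1) * r ^ 2 * (1 - t ^ 2)) ^ ((n - 1) / 2) := by
        rw [intervalIntegral_const_mul_rpow zero_le_one (by positivity)
          fun t ht => by simpa using sq_sub_sq_nonneg ht.1 ht.2,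
          mul_rpow (exp_pos _).le (sq_nonneg r), sq_rpow_div_two (by linarith), ballSliceIntegral,
          mul_assoc]
    _ ≤ ∫ t in (0:ℝ)..1, (2 * exp (-t) * (cosh r - cosh t)) ^ ((n - 1) / 2) := by
        refine intervalIntegral_rpow_mono zero_le_one hq (by fun_prop) (by fun_prop)
          fun t ht => ⟨?_, ?_⟩
        · have : 0 ≤ 1 - t ^ 2 := by simpa using sq_sub_sq_nonneg ht.1 ht.2
          positivity
        · refine le_trans ?_ (exp_neg_mul_sq_sub_sq_le ht.1 (ht.2.trans hr))
          rw [mul_assoc]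
          have : 0 ≤ 1 - t ^ 2 := by simpa using sq_sub_sq_nonneg ht.1 ht.2
          exact mul_le_mul (exp_le_exp.2 (by linarith [ht.2]))
            (by nlinarith [mul_nonneg (sq_nonneg t) (sq_sub_sq_nonneg zero_le_one hr)])
            (by positivity) (exp_pos _).le
    _ ≤ coshIntegral n r := by
        refine intervalIntegral.integral_mono_interval le_rfl zero_le_one hr ?_ ?_
        · filter_upwards [ae_restrict_mem measurableSet_Ioc] with t ht
          exact rpow_nonneg (hkernel t ⟨ht.1.le, ht.2⟩) _
        · exact (Continuous.rpow_const (by fun_prop) fun _ => Or.inr hq).intervalIntegrable _ _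

lemma exp_neg_one_rpow_mul_min_le_coshIntegral (hn : 1 ≤ n) (hr : 0 < r) :
    exp (-1) ^ ((n - 1) / 2) * ballSliceIntegral n * min (r ^ n) (r ^ (n - 1)) ≤
      coshIntegral n r := by
  have hJ := (ballSliceIntegral_pos hn).le
  rcases le_total r 1 with hr1 | hr1
  · calc exp (-1) ^ ((n - 1) / 2) * ballSliceIntegral n * min (r ^ n) (r ^ (n - 1))
        ≤ exp (-r) ^ ((n - 1) / 2) * (r ^ n * ballSliceIntegral n) := by
          rw [mul_comm (r ^ n), ← mul_assoc]
          gcongr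
          exact min_le_left _ _
      _ ≤ coshIntegral n r := exp_neg_rpow_mul_le_coshIntegral hn hr
  · calc exp (-1) ^ ((n - 1) / 2) * ballSliceIntegral n * min (r ^ n) (r ^ (n - 1))
        ≤ exp (-1) ^ ((n - 1) / 2) * (r ^ (n - 1) * ballSliceIntegral n) := by
          rw [mul_comm (r ^ (n - 1)), ← mul_assoc]
          gcongr
          exact min_le_right _ _
      _ ≤ coshIntegral n r := exp_neg_one_rpow_mul_le_coshIntegral hn hr1

lemma tendsto_coshIntegral_div_rpow (hn : 1 ≤ n) :
    Tendsto (fun r => coshIntegral n r / r ^ n) (𝓝[>] 0) (𝓝 (ballSliceIntegral n)) := by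
  have hq : 0 ≤ (n - 1) / 2 := by linarith
  have hlim {f : ℝ → ℝ} (hf : Continuous f) (hf0 : f 0 = 1) :
      Tendsto (fun r => f r ^ ((n - 1) / 2) * ballSliceIntegral n) (𝓝[>] 0)
        (𝓝 (ballSliceIntegral n)) := by
    have hcont : Continuous fun r => f r ^ ((n - 1) / 2) * ballSliceIntegral n :=
      (hf.rpow_const fun _ => Or.inr hq).mul continuous_const
    simpa [hf0] using hcont.continuousWithinAt (s := Ioi 0) (x := 0) |>.tendsto
  refine tendsto_of_tendsto_of_tendsto_of_le_of_le' (hlim (f := fun r => exp (-r)) (by fun_prop)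
    (by simp)) (hlim continuous_cosh cosh_zero) ?_ ?_
  all_goals filter_upwards [self_mem_nhdsWithin] with r (hr : 0 < r)
  · rw [le_div_iff₀ (rpow_pos_of_pos hr n), mul_assoc, mul_comm (ballSliceIntegral n)]
    exact exp_neg_rpow_mul_le_coshIntegral hn hr
  · rw [div_le_iff₀ (rpow_pos_of_pos hr n), mul_assoc, mul_comm (ballSliceIntegral n)]
    exact coshIntegral_le hn hr

end coshIntegral

section scaling

variable {n κ x : ℝ}

lemma rpow_neg_div_two_mul_sqrt_mul_rpow (hκ : 0 < κ) (hx : 0 ≤ x) (m : ℝ) :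
    κ ^ (-n / 2) * (√κ * x) ^ m = κ ^ ((m - n) / 2) * x ^ m := by
  rw [mul_rpow (sqrt_nonneg κ) hx, ← rpow_div_two_eq_sqrt m hκ.le, ← mul_assoc, ← rpow_add hκ]
  ring_nf

lemma tendsto_rpow_neg_mul_coshIntegral_sqrt_mul (hn : 1 ≤ n) (hx : 0 < x) :
    Tendsto (fun κ => κ ^ (-n / 2) * coshIntegral n (√κ * x)) (𝓝[>] 0)
      (𝓝 (x ^ n * ballSliceIntegral n)) := by
  have hscale : Tendsto (fun κ => √κ * x) (𝓝[>] 0) (𝓝[>] 0) := by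
    refine tendsto_nhdsWithin_iff.2 ⟨?_, ?_⟩
    · have : Tendsto (fun κ => √κ * x) (𝓝 0) (𝓝 0) :=
        (continuous_sqrt.mul continuous_const).tendsto' 0 0 (by simp)
      exact this.mono_left nhdsWithin_le_nhds
    · filter_upwards [self_mem_nhdsWithin] with κ (hκ : 0 < κ)
      exact mul_pos (sqrt_pos.2 hκ) hx
  refine (((tendsto_coshIntegral_div_rpow hn).comp hscale).const_mul (x ^ n)).congr' ?_
  filter_upwards [self_mem_nhdsWithin] with κ (hκ : 0 < κ)
  have hv : 0 < (√κ * x) ^ n := rpow_pos_of_pos (mul_pos (sqrt_pos.2 hκ) hx) n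
  have hxn : x ^ n = κ ^ (-n / 2) * (√κ * x) ^ n := by
    rw [rpow_neg_div_two_mul_sqrt_mul_rpow hκ hx.le, sub_self, zero_div, rpow_zero, one_mul]
  simp only [Function.comp_apply]
  rw [hxn]
  field_simp

lemma exp_neg_one_rpow_mul_min_le_rpow_neg_mul_coshIntegral (hn : 1 ≤ n) (hκ : κ ∈ Ioc 0 1)
    (hx : 0 < x) :
    exp (-1) ^ ((n - 1) / 2) * ballSliceIntegral n * min (x ^ n) (x ^ (n - 1)) ≤
      κ ^ (-n / 2) * coshIntegral n (√κ * x) := by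
  have hκn : 0 ≤ κ ^ (-n / 2) := rpow_nonneg hκ.1.le _
  have hJ := (ballSliceIntegral_pos hn).le
  have hmin : min (x ^ n) (x ^ (n - 1)) ≤
      κ ^ (-n / 2) * min ((√κ * x) ^ n) ((√κ * x) ^ (n - 1)) := by
    rw [mul_min_of_nonneg _ _ hκn, rpow_neg_div_two_mul_sqrt_mul_rpow hκ.1 hx.le,
      rpow_neg_div_two_mul_sqrt_mul_rpow hκ.1 hx.le, sub_self, zero_div, rpow_zero, one_mul]
    refine min_le_min le_rfl (le_mul_of_one_le_left (rpow_nonneg hx.le _) ?_)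
    exact one_le_rpow_of_pos_of_le_one_of_nonpos hκ.1 hκ.2 (by linarith)
  calc exp (-1) ^ ((n - 1) / 2) * ballSliceIntegral n * min (x ^ n) (x ^ (n - 1))
      ≤ exp (-1) ^ ((n - 1) / 2) * ballSliceIntegral n *
          (κ ^ (-n / 2) * min ((√κ * x) ^ n) ((√κ * x) ^ (n - 1))) := by gcongr
    _ = κ ^ (-n / 2) * (exp (-1) ^ ((n - 1) / 2) * ballSliceIntegral n *
          min ((√κ * x) ^ n) ((√κ * x) ^ (n - 1))) := by ring
    _ ≤ κ ^ (-n / 2) * coshIntegral n (√κ * x) := by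
      gcongr
      exact exp_neg_one_rpow_mul_min_le_coshIntegral hn (mul_pos (sqrt_pos.2 hκ.1) hx)

end scaling

section Gfun

variable {d : ℕ}

lemma continuous_Gfun (hd : 1 ≤ d) : Continuous (Gfun d) :=
  continuous_const.mul (continuous_coshIntegral (by exact_mod_cast hd))

lemma tendsto_rpow_neg_mul_Gfun_sqrt_mul (hd : 2 ≤ d) {x : ℝ} (hx : 0 < x) :
    Tendsto (fun κ => κ ^ (-(d : ℝ) / 2) * Gfun d (√κ * x)) (𝓝[>] 0)
      (𝓝 (kappaV d / 2 * x ^ (d : ℝ))) := by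
  have hn : (1:ℝ) ≤ d := by exact_mod_cast (by omega : 1 ≤ d)
  simp_rw [Gfun_eq_mul_coshIntegral, mul_left_comm _ (kappaV _)]
  convert (tendsto_rpow_neg_mul_coshIntegral_sqrt_mul hn hx).const_mul (kappaV (d - 1)) using 2
  rw [← kappaV_pred_mul_ballSliceIntegral hd]
  ring

lemma exists_pos_mul_min_le_rpow_neg_mul_Gfun_sqrt_mul (hd : 2 ≤ d) :
    ∃ c > 0, ∀ κ ∈ Ioc (0:ℝ) 1, ∀ x > 0,
      c * min (x ^ (d : ℝ)) (x ^ ((d : ℝ) - 1)) ≤ κ ^ (-(d : ℝ) / 2) * Gfun d (√κ * x) := by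
  have hn : (1:ℝ) ≤ d := by exact_mod_cast (by omega : 1 ≤ d)
  have hkappa : 0 < kappaV (d - 1) := kappaV_pos (by omega)
  have hJ := ballSliceIntegral_pos hn
  refine ⟨kappaV (d - 1) * (exp (-1) ^ (((d : ℝ) - 1) / 2) * ballSliceIntegral d), by positivity,
    fun κ hκ x hx => ?_⟩
  calc _ = kappaV (d - 1) * (exp (-1) ^ (((d : ℝ) - 1) / 2) * ballSliceIntegral d *
        min (x ^ (d : ℝ)) (x ^ ((d : ℝ) - 1))) := by ring
    _ ≤ kappaV (d - 1) * (κ ^ (-(d : ℝ) / 2) * coshIntegral d (√κ * x)) :=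
      mul_le_mul_of_nonneg_left
        (exp_neg_one_rpow_mul_min_le_rpow_neg_mul_coshIntegral hn hκ hx) hkappa.le
    _ = _ := by rw [Gfun_eq_mul_coshIntegral]; ring

end Gfun

lemma integrableOn_exp_neg_mul_rpow {b p : ℝ} (hp : 0 < p) (hb : 0 < b) :
    IntegrableOn (fun x => exp (-b * x ^ p)) (Ioi 0) := by
  simpa using integrableOn_rpow_mul_exp_neg_mul_rpow (s := 0) (by norm_num) hp hb

lemma exp_neg_mul_min_le_add (c a b : ℝ) : exp (-c * min a b) ≤ exp (-c * a) + exp (-c * b) := by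
  rcases min_cases a b with ⟨h, _⟩ | ⟨h, _⟩ <;> rw [h] <;>
    linarith [exp_pos (-c * a), exp_pos (-c * b)]

/-- for every integer `d ≥ 2` and all reals `γ > 0`, `α > 0`,
`lim_{κ→0⁺} ∫₀^∞ exp(−γ κ^{−d/2} G(√κ u^{1/α})) du = ∫₀^∞ exp(−γ (κ_d/2) u^{d/α}) du`. -/
theorem stmt6 (d : ℕ) (hd : 2 ≤ d) (γ α : ℝ) (hγ : 0 < γ) (hα : 0 < α) :
    Tendsto
      (fun κ : ℝ =>
        ∫ u in Set.Ioi (0:ℝ),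
          Real.exp (-γ * κ ^ (-(d : ℝ) / 2) * Gfun d (Real.sqrt κ * u ^ (1 / α))))
      (nhdsWithin 0 (Set.Ioi 0))
      (nhds (∫ u in Set.Ioi (0:ℝ),
        Real.exp (-γ * (kappaV d / 2) * u ^ ((d : ℝ) / α)))) := by
  obtain ⟨c, hc, hGc⟩ := exists_pos_mul_min_le_rpow_neg_mul_Gfun_sqrt_mul hd
  have hpow {u : ℝ} (hu : 0 < u) (m : ℝ) : (u ^ (1 / α)) ^ m = u ^ (m / α) := by
    rw [← rpow_mul hu.le]; ring_nf
  refine tendsto_integral_filter_of_dominated_convergence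
    (fun u => exp (-(γ * c) * u ^ ((d : ℝ) / α)) + exp (-(γ * c) * u ^ (((d : ℝ) - 1) / α)))
    (.of_forall fun κ => Measurable.aestronglyMeasurable ?_) ?_ ?_ ?_
  · have := (continuous_Gfun (by omega : 1 ≤ d)).measurable
    fun_prop
  · filter_upwards [Ioc_mem_nhdsGT zero_lt_one] with κ hκ
    filter_upwards [ae_restrict_mem measurableSet_Ioi] with u (hu : 0 < u)
    have hbound := mul_le_mul_of_nonneg_left (hGc κ hκ _ (rpow_pos_of_pos hu (1 / α))) hγ.le
    rw [hpow hu, hpow hu] at hbound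
    rw [norm_of_nonneg (exp_pos _).le]
    refine (exp_le_exp.2 ?_).trans (exp_neg_mul_min_le_add _ _ _)
    linarith
  · have hd' : (2:ℝ) ≤ d := by exact_mod_cast hd
    exact (integrableOn_exp_neg_mul_rpow (by positivity) (by positivity)).add
      (integrableOn_exp_neg_mul_rpow (div_pos (by linarith) hα) (by positivity))
  · filter_upwards [ae_restrict_mem measurableSet_Ioi] with u (hu : 0 < u)
    convert ((tendsto_rpow_neg_mul_Gfun_sqrt_mul hd (rpow_pos_of_pos hu (1 / α))).const_mul
      (-γ)).rexp using 3 with κ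
    · ring
    · rw [hpow hu]; ring
end

section
/- For every integer d ≥ 2 and all reals c₀ > 0, c₁ > 0, c₂ > 0, there exist constants ĉ₁ > 0 and ĉ₂ > 0, depending only on c₁, c₂, d and c₀, such that for all γ ≥ c₀ and all s ≥ 0: ω_d ∫_s^∞ γ e^{−γ c₁ V₁(r/c₂)} sinh^{d−1}(r) dr ≤ ĉ₁ e^{−γ ĉ₂ V₁(s/c₂)}. -/
open MeasureTheory Real

/-- `V₁(r) := ω_d ∫₀^r sinh^{d−1}(v) dv`, the volume of a ball of radius `r` in
`d`-dimensional hyperbolic space of curvature `−1`. -/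
noncomputable def V1 (d : ℕ) (r : ℝ) : ℝ :=
  omegaS d * ∫ v in (0:ℝ)..r, Real.sinh v ^ (d - 1)

/-! The integrand is dominated by a constant multiple of the derivative of
`r ↦ -exp (-(γ c₁ / 2) V₁(r / c₂))`, whose integral over `(s, ∞)` is `exp (-(γ c₁ / 2) V₁(s / c₂))`.
The domination reduces to `sinh (c₂ t) ^ (d-1) ≤ K sinh t ^ (d-1) exp (c₀ c₁ V₁(t) / 2)`: half of the
exponential decay pays for the change of scale from `t` to `c₂ t`. This holds because
`sinh (c t) ≤ c sinh t e^{c t}`, while `V₁(t) ≥ ω_d t^d / d` grows faster than any linear function. -/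

open Filter Set Topology

lemma omegaS_pos {k : ℕ} (hk : 0 < k) : 0 < omegaS k := by
  have := Gamma_pos_of_pos (by positivity : (0 : ℝ) < k / 2)
  unfold omegaS
  positivity

lemma sinh_le_mul_exp (x : ℝ) : sinh x ≤ x * exp x := by
  have h := add_one_le_exp (-2 * x)
  have hx : exp (-x) = exp x * exp (-2 * x) := by rw [← exp_add]; ring_nf
  rw [sinh_eq, hx]
  nlinarith [exp_pos x]

lemma sinh_mul_le {c t : ℝ} (hc : 0 ≤ c) (ht : 0 ≤ t) :
    sinh (c * t) ≤ c * sinh t * exp (c * t) :=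
  calc sinh (c * t) ≤ c * t * exp (c * t) := sinh_le_mul_exp _
    _ ≤ c * sinh t * exp (c * t) := by
      gcongr
      exact self_le_sinh_iff.2 ht

lemma hasDerivAt_V1 (d : ℕ) (x : ℝ) :
    HasDerivAt (V1 d) (omegaS d * sinh x ^ (d - 1)) x := by
  have hc : Continuous fun v => sinh v ^ (d - 1) := continuous_sinh.pow _
  exact (intervalIntegral.integral_hasDerivAt_right (hc.intervalIntegrable _ _)
    (hc.stronglyMeasurableAtFilter _ _) hc.continuousAt).const_mul _

lemma mul_pow_div_le_V1 {d : ℕ} (hd : 1 ≤ d) {t : ℝ} (ht : 0 ≤ t) :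
    omegaS d * (t ^ d / d) ≤ V1 d t := by
  obtain ⟨n, rfl⟩ : ∃ n, d = n + 1 := ⟨d - 1, by omega⟩
  have hmono : ∫ v in (0:ℝ)..t, v ^ n ≤ ∫ v in (0:ℝ)..t, sinh v ^ n :=
    intervalIntegral.integral_mono_on ht ((continuous_pow n).intervalIntegrable _ _)
      ((continuous_sinh.pow n).intervalIntegrable _ _)
      fun v hv => pow_le_pow_left₀ hv.1 (self_le_sinh_iff.2 hv.1) n
  rw [integral_pow] at hmono
  unfold V1
  gcongr
  · exact (omegaS_pos n.succ_pos).le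
  · simpa using hmono

lemma V1_nonneg {d : ℕ} (hd : 1 ≤ d) {t : ℝ} (ht : 0 ≤ t) : 0 ≤ V1 d t :=
  le_trans (by have := omegaS_pos hd; positivity) (mul_pow_div_le_V1 hd ht)

lemma tendsto_V1_atTop {d : ℕ} (hd : 1 ≤ d) : Tendsto (V1 d) atTop atTop := by
  have hpow : Tendsto (fun t : ℝ => omegaS d * (t ^ d / d)) atTop atTop :=
    ((tendsto_pow_atTop (by omega)).atTop_div_const (by positivity)).const_mul_atTop
      (omegaS_pos hd)
  exact tendsto_atTop_mono' _ ((eventually_ge_atTop 0).mono fun t ht =>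
    mul_pow_div_le_V1 hd ht) hpow

lemma exists_mul_le_add_V1 {d : ℕ} (hd : 2 ≤ d) {L β : ℝ} (hL : 0 ≤ L) (hβ : 0 < β) :
    ∃ M, ∀ t, 0 ≤ t → L * t ≤ M + β * V1 d t := by
  set A := β * omegaS d / d
  have hA : 0 < A := by have := omegaS_pos (by omega : 0 < d); positivity
  set T := max 1 (L / A)
  have hT : 1 ≤ T := le_max_left _ _
  refine ⟨L * T, fun t ht => ?_⟩
  have hV : 0 ≤ β * V1 d t := mul_nonneg hβ.le (V1_nonneg (by omega) ht)
  rcases le_total t T with htT | hTt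
  · nlinarith [mul_le_mul_of_nonneg_left htT hL]
  · have hLA : L ≤ A * t := (div_le_iff₀' hA).1 ((le_max_right _ _).trans hTt)
    calc L * t ≤ A * t ^ 2 := by nlinarith
      _ ≤ A * t ^ d := by gcongr; exact hT.trans hTt
      _ = β * (omegaS d * (t ^ d / d)) := by unfold A; ring
      _ ≤ β * V1 d t := by gcongr; exact mul_pow_div_le_V1 (by omega) ht
      _ ≤ L * T + β * V1 d t := by nlinarith

lemma exists_sinh_mul_pow_le {d : ℕ} (hd : 2 ≤ d) (n : ℕ) {c β : ℝ} (hc : 0 < c) (hβ : 0 < β) :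
    ∃ K, 0 < K ∧ ∀ t, 0 ≤ t → sinh (c * t) ^ n ≤ K * (sinh t ^ n * exp (β * V1 d t)) := by
  obtain ⟨M, hM⟩ := exists_mul_le_add_V1 hd (by positivity : 0 ≤ n * c) hβ
  refine ⟨c ^ n * exp M, by positivity, fun t ht => ?_⟩
  have hsinh : 0 ≤ sinh t := sinh_nonneg_iff.2 ht
  calc sinh (c * t) ^ n ≤ (c * sinh t * exp (c * t)) ^ n :=
        pow_le_pow_left₀ (sinh_nonneg_iff.2 (by positivity)) (sinh_mul_le hc.le ht) n
    _ = c ^ n * sinh t ^ n * exp (n * c * t) := by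
        rw [mul_pow, mul_pow, ← exp_nat_mul, mul_assoc (n : ℝ)]
    _ ≤ c ^ n * sinh t ^ n * exp (M + β * V1 d t) := by gcongr; exact hM t ht
    _ = c ^ n * exp M * (sinh t ^ n * exp (β * V1 d t)) := by rw [exp_add]; ring

lemma integral_Ioi_mul_exp_neg_of_hasDerivAt {G g : ℝ → ℝ} {s : ℝ}
    (hG : ∀ r, s ≤ r → HasDerivAt G (g r) r) (hg : ∀ r, s < r → 0 ≤ g r)
    (hG_top : Tendsto G atTop atTop) :
    IntegrableOn (fun r => g r * exp (-G r)) (Ioi s) ∧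
      ∫ r in Ioi s, g r * exp (-G r) = exp (-G s) := by
  have hderiv : ∀ r ∈ Ici s, HasDerivAt (fun r => -exp (-G r)) (g r * exp (-G r)) r :=
    fun r hr => ((hG r hr).neg.exp).neg.congr_deriv (by simp only [Pi.neg_apply]; ring)
  have hnonneg : ∀ r ∈ Ioi s, 0 ≤ g r * exp (-G r) :=
    fun r hr => mul_nonneg (hg r hr) (exp_pos _).le
  have hlim : Tendsto (fun r => -exp (-G r)) atTop (𝓝 0) := by
    simpa using (tendsto_exp_atBot.comp (tendsto_neg_atTop_atBot.comp hG_top)).neg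
  refine ⟨integrableOn_Ioi_deriv_of_nonneg' hderiv hnonneg hlim, ?_⟩
  rw [integral_Ioi_of_hasDerivAt_of_nonneg' hderiv hnonneg hlim]
  ring

lemma integral_Ioi_sinh_pow_mul_exp_neg_V1 {d : ℕ} (hd : 1 ≤ d) {a c s : ℝ} (ha : 0 < a)
    (hc : 0 < c) (hs : 0 ≤ s) :
    IntegrableOn (fun r => sinh (r / c) ^ (d - 1) * exp (-a * V1 d (r / c))) (Ioi s) ∧
      ∫ r in Ioi s, sinh (r / c) ^ (d - 1) * exp (-a * V1 d (r / c)) =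
        c / (a * omegaS d) * exp (-a * V1 d (s / c)) := by
  have hω := omegaS_pos hd
  have hG : ∀ r, s ≤ r → HasDerivAt (fun r => a * V1 d (r / c))
      (a * omegaS d / c * sinh (r / c) ^ (d - 1)) r := by
    intro r _
    refine (((hasDerivAt_V1 d (r / c)).comp r ((hasDerivAt_id r).div_const c)).const_mul a
      ).congr_deriv ?_
    ring
  have hg : ∀ r, s < r → 0 ≤ a * omegaS d / c * sinh (r / c) ^ (d - 1) := fun r hr => by
    have := sinh_nonneg_iff.2 (div_nonneg (hs.trans hr.le) hc.le)
    positivity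
  obtain ⟨hint, heq⟩ := integral_Ioi_mul_exp_neg_of_hasDerivAt hG hg
    (((tendsto_V1_atTop hd).comp (tendsto_id.atTop_div_const hc)).const_mul_atTop ha)
  have hfun : (fun r => sinh (r / c) ^ (d - 1) * exp (-a * V1 d (r / c))) = fun r =>
      c / (a * omegaS d) * (a * omegaS d / c * sinh (r / c) ^ (d - 1) *
        exp (-(a * V1 d (r / c)))) := by
    funext r
    rw [neg_mul]
    field_simp
  rw [hfun, integral_const_mul, heq, neg_mul]
  exact ⟨hint.const_mul _, rfl⟩

lemma mul_exp_neg_V1_mul_sinh_pow_le {d : ℕ} (hd : 1 ≤ d) {c c₁ β γ K : ℝ} (hc : 0 < c)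
    (hγ : 0 ≤ γ) (hK : 0 ≤ K) (hβ : β ≤ γ * (c₁ / 2))
    (hsinh : ∀ t, 0 ≤ t → sinh (c * t) ^ (d - 1) ≤ K * (sinh t ^ (d - 1) * exp (β * V1 d t)))
    {r : ℝ} (hr : 0 ≤ r) :
    γ * exp (-γ * c₁ * V1 d (r / c)) * sinh r ^ (d - 1) ≤
      K * γ * (sinh (r / c) ^ (d - 1) * exp (-(γ * (c₁ / 2)) * V1 d (r / c))) := by
  have hr₀ : 0 ≤ r / c := div_nonneg hr hc.le
  have hV := V1_nonneg hd hr₀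
  have hsr := hsinh (r / c) hr₀
  rw [mul_div_cancel₀ _ hc.ne'] at hsr
  have := sinh_nonneg_iff.2 hr₀
  calc γ * exp (-γ * c₁ * V1 d (r / c)) * sinh r ^ (d - 1)
      ≤ γ * exp (-γ * c₁ * V1 d (r / c)) *
        (K * (sinh (r / c) ^ (d - 1) * exp (β * V1 d (r / c)))) := by gcongr
    _ = K * γ * (sinh (r / c) ^ (d - 1) * exp (-γ * c₁ * V1 d (r / c) + β * V1 d (r / c))) := by
        rw [exp_add]; ring
    _ ≤ K * γ * (sinh (r / c) ^ (d - 1) * exp (-(γ * (c₁ / 2)) * V1 d (r / c))) := by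
        gcongr
        nlinarith [mul_le_mul_of_nonneg_right hβ hV]

/-- Lemma 8.1: for all `c₀, c₁, c₂ > 0` there exist `chat₁, chat₂ > 0` such that
for all `γ ≥ c₀` and `s ≥ 0`,
`ω_d ∫_s^∞ γ e^{−γ c₁ V₁(r/c₂)} sinh^{d−1}(r) dr ≤ chat₁ e^{−γ chat₂ V₁(s/c₂)}`. -/
theorem stmt11 (d : ℕ) (hd : 2 ≤ d) (c₀ c₁ c₂ : ℝ) (hc₀ : 0 < c₀) (hc₁ : 0 < c₁)
    (hc₂ : 0 < c₂) :
    ∃ chat₁ chat₂ : ℝ, 0 < chat₁ ∧ 0 < chat₂ ∧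
      ∀ γ : ℝ, c₀ ≤ γ → ∀ s : ℝ, 0 ≤ s →
        omegaS d *
            ∫ r in Set.Ioi s, γ * Real.exp (-γ * c₁ * V1 d (r / c₂)) * Real.sinh r ^ (d - 1)
          ≤ chat₁ * Real.exp (-γ * chat₂ * V1 d (s / c₂)) := by
  have hω := omegaS_pos (by omega : 0 < d)
  obtain ⟨K, hK, hsinh⟩ := exists_sinh_mul_pow_le hd (d - 1) hc₂ (by positivity : 0 < c₀ * c₁ / 2)
  refine ⟨2 * K * c₂ / c₁, c₁ / 2, by positivity, by positivity, fun γ hγ s hs => ?_⟩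
  have hγ₀ : 0 < γ := hc₀.trans_le hγ
  obtain ⟨hint, heq⟩ := integral_Ioi_sinh_pow_mul_exp_neg_V1 (by omega : 1 ≤ d)
    (by positivity : 0 < γ * (c₁ / 2)) hc₂ hs
  have hle : ∀ r ∈ Ioi s, γ * exp (-γ * c₁ * V1 d (r / c₂)) * sinh r ^ (d - 1) ≤
      K * γ * (sinh (r / c₂) ^ (d - 1) * exp (-(γ * (c₁ / 2)) * V1 d (r / c₂))) :=
    fun r hr => mul_exp_neg_V1_mul_sinh_pow_le (by omega) hc₂ hγ₀.le hK.le
      (by linarith [mul_le_mul_of_nonneg_right hγ hc₁.le]) hsinh (hs.trans hr.out.le)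
  have hnonneg : ∀ r ∈ Ioi s, 0 ≤ γ * exp (-γ * c₁ * V1 d (r / c₂)) * sinh r ^ (d - 1) :=
    fun r hr => by have := sinh_nonneg_iff.2 (hs.trans hr.out.le); positivity
  calc omegaS d * ∫ r in Ioi s, γ * exp (-γ * c₁ * V1 d (r / c₂)) * sinh r ^ (d - 1)
      ≤ omegaS d * ∫ r in Ioi s,
          K * γ * (sinh (r / c₂) ^ (d - 1) * exp (-(γ * (c₁ / 2)) * V1 d (r / c₂))) := by
        refine mul_le_mul_of_nonneg_left (integral_mono_of_nonneg ?_ (hint.const_mul _) ?_) hω.le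
        exacts [(ae_restrict_iff' measurableSet_Ioi).2 (.of_forall hnonneg),
          (ae_restrict_iff' measurableSet_Ioi).2 (.of_forall hle)]
    _ = 2 * K * c₂ / c₁ * exp (-γ * (c₁ / 2) * V1 d (s / c₂)) := by
        rw [integral_const_mul, heq, neg_mul_eq_neg_mul γ]
        field_simp
end
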